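/- Let i < j < k ≤ n be distinct. If P ∈ PB_n is a product of the elements b_{ij}^{±1}, b_{ik}^{±1}, b_{jk}^{±1} and \widetilde{w}_{ijk}(\widetilde{φ}(P)) = 1 in F_{n+1}^3, then P equals, in PB_n, a product of elements of the form (b_{ij} b_{ik} b_{jk})^{±1} and (b_{jk} b_{ik} b_{ij})^{±1}. -/

import Mathlib

/-- Index type for the generators `a_{ijk}` of `G_n^3`: 3-element subsets of `Fin n`. -/
abbrev TripleIndex (n : ℕ) := {s : Finset (Fin n) // s.card = 3}

/-- Index type for the generators `b_{ij}` (with `i < j`) of the pure braid group. -/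
abbrev PBGen (n : ℕ) := {p : Fin n × Fin n // p.1 < p.2}

/-- Index type for the generators `σ_{ij}` (ordered pairs of distinct indices). -/
abbrev SGen (n : ℕ) := {p : Fin n × Fin n // p.1 ≠ p.2}

/-- Generators of the group `\widetilde{G}_n^3`. -/
abbrev TGen (n : ℕ) := TripleIndex n ⊕ SGen n

/-- `a_{ijk}` interpreted via `f`, equal to `1` when `i,j,k` are not pairwise distinct. -/
def atri {n : ℕ} {G : Type*} [Group G] (f : TripleIndex n → G) (i j k : Fin n) : G :=
  if h : ({i, j, k} : Finset (Fin n)).card = 3 then f ⟨{i, j, k}, h⟩ else 1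

/-- `σ_{ij}` interpreted via `f`, equal to `1` when `i = j`. -/
def sgen {n : ℕ} {G : Type*} [Group G] (f : SGen n → G) (i j : Fin n) : G :=
  if h : i ≠ j then f ⟨(i, j), h⟩ else 1

/-- `b_{ij}` interpreted via `f`, equal to `1` unless `i < j`. -/
def bgen {n : ℕ} {G : Type*} [Group G] (f : PBGen n → G) (i j : Fin n) : G :=
  if h : i < j then f ⟨(i, j), h⟩ else 1

/-- The letter `b_{ij}` in the free group on the pure braid generators. -/
def pbB {n : ℕ} (i j : Fin n) : FreeGroup (PBGen n) := bgen FreeGroup.of i j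

/-- The letter `a_{ijk}` in the free group on the generators of `G_n^3`. -/
def frA {n : ℕ} (i j k : Fin n) : FreeGroup (TripleIndex n) := atri FreeGroup.of i j k

/-- The letter `a_{ijk}` in the free group on the generators of `\widetilde{G}_n^3`. -/
def tA {n : ℕ} (i j k : Fin n) : FreeGroup (TGen n) :=
  atri (fun t => FreeGroup.of (Sum.inl t)) i j k

/-- The letter `σ_{ij}` in the free group on the generators of `\widetilde{G}_n^3`. -/
def tS {n : ℕ} (i j : Fin n) : FreeGroup (TGen n) :=
  sgen (fun p => FreeGroup.of (Sum.inr p)) i j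

/-- The defining relators of the pure braid group `PB_n`
(Cohen–Falk–Randell presentation), written as relators `LHS * RHS⁻¹`. -/
def PBRels (n : ℕ) : Set (FreeGroup (PBGen n)) :=
  { x | ∃ i j r s : Fin n, i < j ∧ r < s ∧
      (((s < i ∨ j < r) ∧
          x = pbB r s * pbB i j * (pbB r s)⁻¹ * (pbB i j)⁻¹) ∨
        ((j = r) ∧
          x = pbB r s * pbB i j * (pbB r s)⁻¹ * ((pbB i s)⁻¹ * pbB i j * pbB i s)⁻¹) ∨
        ((i < r ∧ j = s) ∧
          x = pbB r s * pbB i j * (pbB r s)⁻¹ *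
            ((pbB i j)⁻¹ * (pbB i r)⁻¹ * pbB i j * pbB i r * pbB i j)⁻¹) ∨
        ((i < r ∧ r < j ∧ j < s) ∧
          x = pbB r s * pbB i j * (pbB r s)⁻¹ *
            ((pbB i s)⁻¹ * (pbB i r)⁻¹ * pbB i s * pbB i r * pbB i j *
              (pbB i r)⁻¹ * (pbB i s)⁻¹ * pbB i r * pbB i s)⁻¹)) }

/-- The pure braid group on `n` strands, via its standard presentation. -/
abbrev PBn (n : ℕ) := PresentedGroup (PBRels n)

/-- The defining relators of `G_n^3`. -/
def Gn3Rels (n : ℕ) : Set (FreeGroup (TripleIndex n)) :=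
  { x | (∃ t : TripleIndex n, x = FreeGroup.of t * FreeGroup.of t) ∨
      (∃ t u : TripleIndex n, (t.1 ∩ u.1).card ≤ 1 ∧
        x = FreeGroup.of t * FreeGroup.of u * (FreeGroup.of u * FreeGroup.of t)⁻¹) ∨
      (∃ i j k l : Fin n, [i, j, k, l].Nodup ∧
        x = frA i j k * frA i j l * frA i k l * frA j k l *
          (frA j k l * frA i k l * frA i j l * frA i j k)⁻¹) }

/-- The group `G_n^3`. -/
abbrev Gn3 (n : ℕ) := PresentedGroup (Gn3Rels n)

/-- The defining relators of `\widetilde{G}_n^3`, relations (a)–(i). -/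
def TGn3Rels (n : ℕ) : Set (FreeGroup (TGen n)) :=
  { x | (∃ t : TripleIndex n,
          x = FreeGroup.of (Sum.inl t) * FreeGroup.of (Sum.inl t)) ∨
      (∃ t u : TripleIndex n, (t.1 ∩ u.1).card ≤ 1 ∧
          x = FreeGroup.of (Sum.inl t) * FreeGroup.of (Sum.inl u) *
            (FreeGroup.of (Sum.inl u) * FreeGroup.of (Sum.inl t))⁻¹) ∨
      (∃ i j k l : Fin n, [i, j, k, l].Nodup ∧
          x = tA i j k * tA i j l * tA i k l * tA j k l *
            (tA j k l * tA i k l * tA i j l * tA i j k)⁻¹) ∨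
      (∃ i j k l : Fin n, [i, j, k, l].Nodup ∧
          x = tS i j * tS k l * (tS k l * tS i j)⁻¹) ∨
      (∃ (i j : Fin n) (u : TripleIndex n), i ≠ j ∧
          (({i, j} : Finset (Fin n)) ∩ u.1).card ≤ 1 ∧
          x = tS i j * FreeGroup.of (Sum.inl u) *
            (FreeGroup.of (Sum.inl u) * tS i j)⁻¹) ∨
      (∃ i j k : Fin n, [i, j, k].Nodup ∧
          (x = tA i j k * tS i j * tS i k * tS j k *
              (tS j k * tS i k * tS i j * tA i j k)⁻¹ ∨
            x = tS i j * tA i j k * tS i k * tS j k *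
              (tS j k * tS i k * tA i j k * tS i j)⁻¹ ∨
            x = tS i j * tS i k * tA i j k * tS j k *
              (tS j k * tA i j k * tS i k * tS i j)⁻¹ ∨
            x = tS i j * tS i k * tS j k * tA i j k *
              (tA i j k * tS j k * tS i k * tS i j)⁻¹)) }

/-- The group `\widetilde{G}_n^3`. -/
abbrev TGn3 (n : ℕ) := PresentedGroup (TGn3Rels n)

/-- Ordered product of `f l` over all `l > k`, in increasing order of `l`. -/
def listUp {n : ℕ} {G : Type*} [Group G] (f : Fin n → G) (k : Fin n) : G :=
  (((List.finRange n).filter fun l => decide (k < l)).map f).prod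

/-- Ordered product of `f l` over all `l < k`, in increasing order of `l`. -/
def listLow {n : ℕ} {G : Type*} [Group G] (f : Fin n → G) (k : Fin n) : G :=
  (((List.finRange n).filter fun l => decide (l < k)).map f).prod

/-- The word `c_{i,k} = (∏_{l=k+1}^{n} a_{ikl}) (∏_{l=1}^{k-1} a_{ikl})`
(degenerate letters give `1`, so the products effectively omit `l ∈ {i,k}`). -/
def cPhi {n : ℕ} {G : Type*} [Group G] (f : TripleIndex n → G) (i k : Fin n) : G :=
  listUp (fun l => atri f i k l) k * listLow (fun l => atri f i k l) k

/-- The word `φ(b_{ij}) = c_{i,i+1}⁻¹ ⋯ c_{i,j-1}⁻¹ (c_{i,j})² c_{i,j-1} ⋯ c_{i,i+1}`. -/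
def phiWord {n : ℕ} {G : Type*} [Group G] (f : TripleIndex n → G) (i j : Fin n) : G :=
  (((List.finRange n).filter fun m => decide (i < m ∧ m < j)).map
      fun m => (cPhi f i m)⁻¹).prod *
    (cPhi f i j) ^ 2 *
    ((((List.finRange n).filter fun m => decide (i < m ∧ m < j)).map
      fun m => (cPhi f i m)⁻¹).prod)⁻¹

/-- `φ` on the generators of `PB_n`, with values in `G_n^3`. -/
def phiGen {n : ℕ} : PBGen n → Gn3 n :=
  fun p => phiWord PresentedGroup.of p.1.1 p.1.2

/-- The word `(∏_{k=m+1}^{n} a_{imk}) · σ · (∏_{k=1}^{m-1} a_{imk})` for a middle letter `σ`. -/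
def cMid {n : ℕ} {G : Type*} [Group G] (fa : TripleIndex n → G) (σmid : G) (i m : Fin n) : G :=
  listUp (fun k => atri fa i m k) m * σmid * listLow (fun k => atri fa i m k) m

/-- The word `\widetilde{φ}(b_{ij}) = c_{i,i+1}⁻¹ ⋯ c_{i,j-1}⁻¹ \bar c_{i,j} \bar c_{j,i}
c_{i,j-1} ⋯ c_{i,i+1}`, where `c_{i,m}`, `\bar c_{i,m}`, `\bar c_{j,i}` are as in the paper. -/
def tphiWord {n : ℕ} {G : Type*} [Group G] (fa : TripleIndex n → G) (fs : SGen n → G)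
    (i j : Fin n) : G :=
  (((List.finRange n).filter fun m => decide (i < m ∧ m < j)).map
      fun m => (cMid fa (sgen fs i m)⁻¹ i m)⁻¹).prod *
    cMid fa (sgen fs i j) i j * cMid fa (sgen fs j i) i j *
    ((((List.finRange n).filter fun m => decide (i < m ∧ m < j)).map
      fun m => (cMid fa (sgen fs i m)⁻¹ i m)⁻¹).prod)⁻¹

/-- `\widetilde{φ}` on the generators of `PB_n`, with values in `\widetilde{G}_n^3`. -/
def tphiGen {n : ℕ} : PBGen n → TGn3 n :=
  fun p => tphiWord (fun t => PresentedGroup.of (Sum.inl t))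
    (fun q => PresentedGroup.of (Sum.inr q)) p.1.1 p.1.2
/-- Index set for the free product `F_n^3`: functions from `{1,…,n} ∖ {i,j,k}` to `ℤ/2 × ℤ/2`. -/
def Fn3Idx (n : ℕ) (i j k : Fin n) : Type :=
  {l : Fin n // l ≠ i ∧ l ≠ j ∧ l ≠ k} → ZMod 2 × ZMod 2

/-- Relators of `F_n^3`: every generator is an involution. -/
def Fn3Rels (n : ℕ) (i j k : Fin n) : Set (FreeGroup (Fn3Idx n i j k)) :=
  { x | ∃ f : Fn3Idx n i j k, x = FreeGroup.of f * FreeGroup.of f }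

/-- The group `F_n^3`: the free product of copies of `ℤ/2` indexed by `Fn3Idx n i j k`. -/
abbrev Fn3 (n : ℕ) (i j k : Fin n) := PresentedGroup (Fn3Rels n i j k)

/-- The number of occurrences of the letter `a_{xyz}` in a word in the generators of `G_n^3`. -/
def cntA {n : ℕ} (L : List (TripleIndex n)) (x y z : Fin n) : ℕ :=
  L.countP fun t => decide (t.1 = ({x, y, z} : Finset (Fin n)))

/-- The index of an occurrence of `a_{ijk}` whose preceding prefix is `pre`:
`l ↦ (N_{jkl} + N_{ijl}, N_{ikl} + N_{ijl})` in `ℤ/2 × ℤ/2`. -/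
def idxOf {n : ℕ} (i j k : Fin n) (pre : List (TripleIndex n)) : Fn3Idx n i j k :=
  fun l => (((cntA pre j k l.1 + cntA pre i j l.1 : ℕ) : ZMod 2),
            ((cntA pre i k l.1 + cntA pre i j l.1 : ℕ) : ZMod 2))

/-- Auxiliary recursion computing `w_{ijk}` of a word: `pre` is the prefix read so far. -/
def wRec {n : ℕ} (i j k : Fin n) :
    List (TripleIndex n) → List (TripleIndex n) → Fn3 n i j k
  | _, [] => 1
  | pre, t :: rest =>
      (if t.1 = ({i, j, k} : Finset (Fin n)) then
          PresentedGroup.of (idxOf i j k pre) else 1) *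
        wRec i j k (pre ++ [t]) rest

/-- The index-counting map `w_{ijk}` on words in the generators of `G_n^3`. -/
def wWord {n : ℕ} (i j k : Fin n) (L : List (TripleIndex n)) : Fn3 n i j k :=
  wRec i j k [] L

/-- The element of `G_n^3` represented by a word in the generators. -/
def gn3Word {n : ℕ} (L : List (TripleIndex n)) : Gn3 n :=
  (L.map PresentedGroup.of).prod

/-- The inclusion of triples of `{1,…,n}` into triples of `{1,…,n+1}`. -/
def castTriple {n : ℕ} (t : TripleIndex n) : TripleIndex (n + 1) :=
  ⟨t.1.map ⟨Fin.castSucc, Fin.castSucc_injective n⟩, by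
    rw [Finset.card_map]; exact t.2⟩

/-- The triple `{i, j, n+1}` associated with `σ_{ij}`. -/
def sigTriple {n : ℕ} (p : SGen n) : TripleIndex (n + 1) :=
  ⟨{p.1.1.castSucc, p.1.2.castSucc, Fin.last n},
    Finset.card_eq_three.mpr ⟨_, _, _,
      fun h => p.2 (Fin.castSucc_injective n h),
      (Fin.castSucc_lt_last _).ne, (Fin.castSucc_lt_last _).ne, rfl⟩⟩

/-- `π` on the generators of `\widetilde{G}_n^3`: `a_{ijk} ↦ a_{ijk}`, `σ_{ij} ↦ a_{ij(n+1)}`. -/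
def piGen {n : ℕ} : TGen n → Gn3 (n + 1)
  | Sum.inl t => PresentedGroup.of (castTriple t)
  | Sum.inr p => PresentedGroup.of (sigTriple p)

/-!
Read each generator of `F_{n+1}^3` only at the coordinate `l = n + 1`. At an occurrence of
`a_{ijk}` in `π(\widetilde{φ}(b))` that coordinate records the parities of the letters
`σ_{jk}, σ_{ik}, σ_{ij}` (i.e. `a_{jk(n+1)}, a_{ik(n+1)}, a_{ij(n+1)}`) read before it, and
sending its four possible values to three reflections `a, b, c` and `1` defines a homomorphism
from `F_{n+1}^3` onto `ℤ/2 * ℤ/2 * ℤ/2`. Following the σ-letters through the words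
`\widetilde{φ}(b_{ij})`, `\widetilde{φ}(b_{ik})`, `\widetilde{φ}(b_{jk})` shows that they are
sent to `ab`, `bc`, `ca`. Now `ab` and `bc` freely generate the even subgroup, and
`(ab)(bc)(ca) = 1`; so if `P` is a word `W` in `b_{ij}, b_{ik}, b_{jk}` with trivial image, then
`W` lies in the normal closure of the letter product `b_{ij} b_{ik} b_{jk}`. This element commutes
with `b_{ij}`, `b_{ik}`, `b_{jk}` in `PB_n`, so that normal closure is sent into its cyclic
subgroup.
-/

lemma Finset.triple_eq_triple_iff {α : Type*} [DecidableEq α] {a b c l : α} (hca : c ≠ a)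
    (hcb : c ≠ b) : ({a, b, l} : Finset α) = {a, b, c} ↔ l = c := by
  refine ⟨fun h => ?_, fun h => h ▸ rfl⟩
  have hc : c ∈ ({a, b, l} : Finset α) := h ▸ by simp
  simp only [Finset.mem_insert, Finset.mem_singleton] at hc
  exact (hc.resolve_left hca |>.resolve_left hcb).symm

lemma List.count_filter_finRange {n : ℕ} (p : Fin n → Bool) (c : Fin n) :
    ((List.finRange n).filter p).count c = if p c then 1 else 0 := by
  split_ifs with h
  · rw [List.count_filter h, List.count_finRange]
  · exact List.count_eq_zero_of_not_mem fun hc => h (List.mem_filter.mp hc).2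

namespace FreeGroup

variable {α : Type*}

def invGens : FreeGroup α ≃* FreeGroup α :=
  have h : (lift fun a => (of a)⁻¹).comp (lift fun a => (of a)⁻¹) =
      MonoidHom.id (FreeGroup α) :=
    ext_hom _ _ fun a => by simp
  MonoidHom.toMulEquiv _ _ h h

@[simp]
lemma invGens_of (a : α) : invGens (of a) = (of a)⁻¹ :=
  lift_apply_of (f := fun a => (of a)⁻¹)

def signAction : ℤˣ →* MulAut (FreeGroup α) where
  toFun u := if u = 1 then 1 else invGens
  map_one' := if_pos rfl
  map_mul' u v := by
    have hsq : (invGens : MulAut (FreeGroup α)) * invGens = 1 := by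
      refine MulEquiv.toMonoidHom_injective (ext_hom _ _ fun a => ?_)
      simp [MulAut.mul_apply]
    rcases Int.units_eq_one_or u with rfl | rfl <;>
      rcases Int.units_eq_one_or v with rfl | rfl <;> simp [hsq]

@[simp]
lemma signAction_neg_one_of (a : α) : signAction (-1) (of a) = (of a)⁻¹ := by
  simp [signAction]

end FreeGroup

/-- `ℤ/2 * ℤ/2 * ℤ/2`, realised as `F₂ ⋊ ℤ/2` with `ℤ/2` inverting both generators:
the reflections `a, b, c` below generate it, and `a * b`, `b * c` are the free generators
of `F₂`. -/
abbrev FreeReflGroup := FreeGroup (Fin 2) ⋊[FreeGroup.signAction] ℤˣ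

namespace FreeReflGroup

def reflect (g : FreeGroup (Fin 2)) : FreeReflGroup := ⟨g, -1⟩

lemma reflect_mul_reflect (g h : FreeGroup (Fin 2)) :
    reflect g * reflect h = SemidirectProduct.inl (g * FreeGroup.signAction (-1) h) := by
  ext <;> simp [reflect]

def a : FreeReflGroup := reflect (.of 0)
def b : FreeReflGroup := reflect 1
def c : FreeReflGroup := reflect (.of 1)⁻¹

def ofIdx (v : ZMod 2 × ZMod 2) : FreeReflGroup := ![![a, 1], ![c, b]] v.1 v.2

lemma ofIdx_mul_self (v : ZMod 2 × ZMod 2) : ofIdx v * ofIdx v = 1 := by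
  obtain ⟨x, y⟩ := v
  fin_cases x <;> fin_cases y <;> simp [ofIdx, a, b, c, reflect_mul_reflect]

lemma a_mul_b : a * b = SemidirectProduct.inl (.of 0) := by simp [a, b, reflect_mul_reflect]
lemma b_mul_c : b * c = SemidirectProduct.inl (.of 1) := by simp [b, c, reflect_mul_reflect]
lemma c_mul_a : c * a = SemidirectProduct.inl (.of 0 * .of 1)⁻¹ := by
  simp [a, c, reflect_mul_reflect]

end FreeReflGroup

section Rho

open Subgroup

def rho : FreeGroup (Fin 3) →* FreeGroup (Fin 2) :=
  FreeGroup.lift ![.of 0, .of 1, (.of 0 * .of 1)⁻¹]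

lemma ker_rho_le {K : Subgroup (FreeGroup (Fin 3))} [K.Normal]
    (hK : .of 0 * .of 1 * .of 2 ∈ K) : rho.ker ≤ K := by
  let u : FreeGroup (Fin 2) →* FreeGroup (Fin 3) ⧸ K :=
    FreeGroup.lift ![QuotientGroup.mk (.of 0), QuotientGroup.mk (.of 1)]
  -- modulo `K`, `of 2 = (of 0 * of 1)⁻¹`
  have hu : u.comp rho = QuotientGroup.mk' K := by
    refine FreeGroup.ext_hom _ _ fun a => ?_
    have hXYZ := (QuotientGroup.eq_one_iff _).mpr hK
    rw [QuotientGroup.mk_mul, QuotientGroup.mk_mul] at hXYZ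
    fin_cases a <;> simp [u, rho, eq_inv_of_mul_eq_one_right hXYZ]
  intro W hW
  rw [← QuotientGroup.eq_one_iff, ← QuotientGroup.mk'_apply, ← hu, MonoidHom.comp_apply,
    MonoidHom.mem_ker.mp hW, _root_.map_one]

lemma comap_zpowers_normal {G H : Type*} [Group G] [Group H] (θ : G →* H) {Δ : H}
    (hΔ : ∀ g, Commute (θ g) Δ) : ((zpowers Δ).comap θ).Normal := by
  constructor
  intro u hu g
  obtain ⟨m, hm⟩ := mem_zpowers_iff.mp (mem_comap.mp hu)
  refine mem_comap.mpr (mem_zpowers_iff.mpr ⟨m, ?_⟩)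
  rw [map_mul, map_mul, map_inv, ← hm, ((hΔ g).zpow_right m).eq, mul_inv_cancel_right]

lemma lift_mem_zpowers_of_rho_eq_one {G : Type*} [Group G] {a b c : G}
    (ha : Commute a (a * b * c)) (hb : Commute b (a * b * c)) {W : FreeGroup (Fin 3)}
    (hW : rho W = 1) : FreeGroup.lift ![a, b, c] W ∈ zpowers (a * b * c) := by
  have hc : Commute c (a * b * c) := by
    -- `c = (a * b)⁻¹ * (a * b * c)`
    simpa [mul_assoc] using ((ha.mul_left hb).inv_left).mul_left (Commute.refl (a * b * c))
  have hθ : ∀ g, Commute (FreeGroup.lift ![a, b, c] g) (a * b * c) := by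
    intro g
    induction g using FreeGroup.induction_on with
    | C1 => exact Commute.one_left _
    | of x => fin_cases x <;> simpa
    | inv_of x hx => simpa using hx.inv_left
    | mul x y hx hy => simpa using hx.mul_left hy
  have := comap_zpowers_normal _ hθ
  exact ker_rho_le (K := (zpowers _).comap _) (by simp [mem_zpowers]) hW

end Rho

abbrev pbOf {n : ℕ} (a b : Fin n) (h : a < b) : PBn n := PresentedGroup.of ⟨(a, b), h⟩

lemma pbB_of_lt {n : ℕ} {a b : Fin n} (h : a < b) :
    pbB a b = FreeGroup.of (⟨(a, b), h⟩ : PBGen n) :=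
  dif_pos h

section PureBraid

variable {n : ℕ} {i j k : Fin n} (hij : i < j) (hjk : j < k)
include hij hjk

lemma pbOf_jk_mul_ij : pbOf j k hjk * pbOf i j hij =
    (pbOf i k (hij.trans hjk))⁻¹ * pbOf i j hij * pbOf i k (hij.trans hjk) * pbOf j k hjk := by
  have h := PresentedGroup.one_of_mem (rels := PBRels n)
    ⟨i, j, j, k, hij, hjk, Or.inr (Or.inl ⟨rfl, rfl⟩)⟩
  simp only [pbB_of_lt hij, pbB_of_lt hjk, pbB_of_lt (hij.trans hjk), map_mul, map_inv,
    mul_inv_eq_one, ← PresentedGroup.of.eq_1] at h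
  rw [← h]
  group

lemma pbOf_jk_mul_ik : pbOf j k hjk * pbOf i k (hij.trans hjk) =
    (pbOf i k (hij.trans hjk))⁻¹ * (pbOf i j hij)⁻¹ * pbOf i k (hij.trans hjk) *
      pbOf i j hij * pbOf i k (hij.trans hjk) * pbOf j k hjk := by
  have h := PresentedGroup.one_of_mem (rels := PBRels n)
    ⟨i, k, j, k, hij.trans hjk, hjk, Or.inr (Or.inr (Or.inl ⟨⟨hij, rfl⟩, rfl⟩))⟩
  simp only [pbB_of_lt hij, pbB_of_lt hjk, pbB_of_lt (hij.trans hjk), map_mul, map_inv,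
    mul_inv_eq_one, ← PresentedGroup.of.eq_1] at h
  rw [← h]
  group

lemma commute_pbOf_ij_delta : Commute (pbOf i j hij)
    (pbOf i j hij * pbOf i k (hij.trans hjk) * pbOf j k hjk) := by
  calc pbOf i j hij * (pbOf i j hij * pbOf i k (hij.trans hjk) * pbOf j k hjk)
      = pbOf i j hij * pbOf i k (hij.trans hjk) *
          ((pbOf i k (hij.trans hjk))⁻¹ * pbOf i j hij * pbOf i k (hij.trans hjk) *
            pbOf j k hjk) := by group
    _ = _ := by rw [← pbOf_jk_mul_ij hij hjk]; group

lemma commute_pbOf_ik_delta : Commute (pbOf i k (hij.trans hjk))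
    (pbOf i j hij * pbOf i k (hij.trans hjk) * pbOf j k hjk) := by
  calc pbOf i k (hij.trans hjk) * (pbOf i j hij * pbOf i k (hij.trans hjk) * pbOf j k hjk)
      = pbOf i j hij * pbOf i k (hij.trans hjk) *
          ((pbOf i k (hij.trans hjk))⁻¹ * (pbOf i j hij)⁻¹ * pbOf i k (hij.trans hjk) *
            pbOf i j hij * pbOf i k (hij.trans hjk) * pbOf j k hjk) := by group
    _ = _ := by rw [← pbOf_jk_mul_ik hij hjk]; group

end PureBraid

section Words

variable {n : ℕ}

lemma gn3_of_mul_self (t : TripleIndex n) :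
    (PresentedGroup.of t : Gn3 n) * PresentedGroup.of t = 1 :=
  (map_mul _ _ _).symm.trans (PresentedGroup.one_of_mem (Or.inl ⟨t, rfl⟩))

lemma gn3Word_cons (t : TripleIndex n) (L : List (TripleIndex n)) :
    gn3Word (t :: L) = PresentedGroup.of t * gn3Word L :=
  List.prod_cons

lemma gn3Word_append (L₁ L₂ : List (TripleIndex n)) :
    gn3Word (L₁ ++ L₂) = gn3Word L₁ * gn3Word L₂ := by
  simp [gn3Word]

lemma gn3Word_reverse (L : List (TripleIndex n)) : gn3Word L.reverse = (gn3Word L)⁻¹ := by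
  induction L with
  | nil => simp [gn3Word]
  | cons t L ih =>
    rw [List.reverse_cons, gn3Word_append, ih, gn3Word_cons, gn3Word_cons, mul_inv_rev,
      inv_eq_of_mul_eq_one_left (gn3_of_mul_self t)]
    simp [gn3Word]

lemma gn3Word_flatMap {β : Type*} (f : β → List (TripleIndex n)) (L : List β) :
    gn3Word (L.flatMap f) = (L.map fun b => gn3Word (f b)).prod := by
  induction L with
  | nil => rfl
  | cons b L ih => rw [List.flatMap_cons, gn3Word_append, ih, List.map_cons, List.prod_cons]

def tripleLetter (a b c : Fin n) : List (TripleIndex (n + 1)) :=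
  if h : ({a, b, c} : Finset (Fin n)).card = 3 then [castTriple ⟨_, h⟩] else []

def sigmaLetter (a b : Fin n) : List (TripleIndex (n + 1)) :=
  if h : a ≠ b then [sigTriple ⟨(a, b), h⟩] else []

lemma gn3Word_tripleLetter (a b c : Fin n) :
    gn3Word (tripleLetter a b c) = atri (fun t => PresentedGroup.of (castTriple t)) a b c := by
  unfold tripleLetter atri
  split_ifs <;> simp [gn3Word]

lemma gn3Word_sigmaLetter (a b : Fin n) :
    gn3Word (sigmaLetter a b) = sgen (fun p => PresentedGroup.of (sigTriple p)) a b := by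
  unfold sigmaLetter sgen
  split_ifs <;> simp [gn3Word]

def upWord (a b : Fin n) : List (TripleIndex (n + 1)) :=
  ((List.finRange n).filter fun l => decide (b < l)).flatMap (tripleLetter a b)

def lowWord (a b : Fin n) : List (TripleIndex (n + 1)) :=
  ((List.finRange n).filter fun l => decide (l < b)).flatMap (tripleLetter a b)

def cWord (σ : List (TripleIndex (n + 1))) (a b : Fin n) : List (TripleIndex (n + 1)) :=
  upWord a b ++ σ ++ lowWord a b

def preWord (a b : Fin n) : List (TripleIndex (n + 1)) :=
  ((List.finRange n).filter fun m => decide (a < m ∧ m < b)).flatMap fun m =>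
    (cWord (sigmaLetter a m) a m).reverse

/-- The word `π(\widetilde{φ}(b_{ab}))` in the generators of `G_{n+1}^3`, each inverse `c⁻¹` being
spelled as the reversed word of `c` (the generators are involutions). -/
def tphiLetters (a b : Fin n) : List (TripleIndex (n + 1)) :=
  preWord a b ++ cWord (sigmaLetter a b) a b ++ cWord (sigmaLetter b a) a b ++ (preWord a b).reverse

lemma gn3Word_cWord (σ : List (TripleIndex (n + 1))) (a b : Fin n) :
    gn3Word (cWord σ a b) =
      cMid (fun t => PresentedGroup.of (castTriple t)) (gn3Word σ) a b := by
  simp only [cWord, cMid, upWord, lowWord, listUp, listLow, gn3Word_append, gn3Word_flatMap,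
    gn3Word_tripleLetter]

lemma tphiWord_eq_gn3Word (a b : Fin n) :
    tphiWord (fun t => PresentedGroup.of (castTriple t)) (fun p => PresentedGroup.of (sigTriple p))
      a b = gn3Word (tphiLetters a b) := by
  have hinv : ∀ a b : Fin n,
      (sgen (fun p => (PresentedGroup.of (sigTriple p) : Gn3 (n + 1))) a b)⁻¹ =
        sgen (fun p => PresentedGroup.of (sigTriple p)) a b := fun a b => by
    unfold sgen; split_ifs <;> simp [inv_eq_of_mul_eq_one_left (gn3_of_mul_self _)]
  simp only [tphiWord, tphiLetters, preWord, gn3Word_append, gn3Word_reverse, gn3Word_flatMap,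
    gn3Word_cWord, gn3Word_sigmaLetter, hinv]

lemma map_tphiWord {G G' : Type*} [Group G] [Group G'] (F : G →* G') (fa : TripleIndex n → G)
    (fs : SGen n → G) (a b : Fin n) :
    F (tphiWord fa fs a b) = tphiWord (F ∘ fa) (F ∘ fs) a b := by
  have hatri : ∀ a b c, F (atri fa a b c) = atri (F ∘ fa) a b c := fun a b c => by
    unfold atri; split_ifs <;> simp
  have hsgen : ∀ a b, F (sgen fs a b) = sgen (F ∘ fs) a b := fun a b => by
    unfold sgen; split_ifs <;> simp
  simp [tphiWord, cMid, listUp, listLow, map_list_prod, Function.comp_def, hatri, hsgen]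

end Words

section Letters

variable {n : ℕ}

lemma castTriple_val (u : TripleIndex n) :
    (castTriple u).1 = u.1.map ⟨Fin.castSucc, Fin.castSucc_injective n⟩ := rfl

lemma map_castSucc_triple (a b c : Fin n) :
    ({a, b, c} : Finset (Fin n)).map ⟨Fin.castSucc, Fin.castSucc_injective n⟩ =
      {a.castSucc, b.castSucc, c.castSucc} := by
  simp [Finset.map_insert]

lemma mem_tripleLetter {a b c : Fin n} {t : TripleIndex (n + 1)} (ht : t ∈ tripleLetter a b c) :
    t.1 = {a.castSucc, b.castSucc, c.castSucc} := by
  unfold tripleLetter at ht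
  split_ifs at ht
  · rw [List.mem_singleton.mp ht, castTriple_val, map_castSucc_triple]
  · cases ht

lemma mem_flatMap_tripleLetter {a b : Fin n} {L : List (Fin n)} {t : TripleIndex (n + 1)}
    (ht : t ∈ L.flatMap (tripleLetter a b)) :
    Fin.last n ∉ t.1 ∧ b.castSucc ∈ t.1 := by
  obtain ⟨l, -, hl⟩ := List.mem_flatMap.mp ht
  rw [mem_tripleLetter hl]
  simp [(Fin.castSucc_lt_last _).ne']

lemma sigTriple_val (a b : Fin n) (h : a ≠ b) :
    (sigTriple ⟨(a, b), h⟩).1 = {a.castSucc, b.castSucc, Fin.last n} := rfl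

lemma sigTriple_swap_val (a b : Fin n) (h : b ≠ a) :
    (sigTriple ⟨(b, a), h⟩).1 = {a.castSucc, b.castSucc, Fin.last n} :=
  Finset.insert_comm _ _ _

lemma mem_cWord_sigmaLetter {a b : Fin n} {t : TripleIndex (n + 1)}
    (ht : t ∈ cWord (sigmaLetter a b) a b) : b.castSucc ∈ t.1 := by
  rcases List.mem_append.mp ht with ht | ht
  · rcases List.mem_append.mp ht with ht | hσ
    · exact (mem_flatMap_tripleLetter ht).2
    · unfold sigmaLetter at hσ
      split_ifs at hσ
      · simp [List.mem_singleton.mp hσ, sigTriple_val]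
      · cases hσ
  · exact (mem_flatMap_tripleLetter ht).2

lemma cWord_sigmaLetter {a b c d : Fin n} (h : c ≠ d) :
    cWord (sigmaLetter c d) a b = upWord a b ++ sigTriple ⟨(c, d), h⟩ :: lowWord a b := by
  simp [cWord, sigmaLetter, h]

lemma reverse_cWord_sigmaLetter {a b c d : Fin n} (h : c ≠ d) :
    (cWord (sigmaLetter c d) a b).reverse =
      (lowWord a b).reverse ++ sigTriple ⟨(c, d), h⟩ :: (upWord a b).reverse := by
  simp [cWord_sigmaLetter h]

lemma ne_pair_last_of_castSucc_mem {x a b : Fin n} {s : Finset (Fin (n + 1))}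
    (hx : x.castSucc ∈ s) (ha : x ≠ a) (hb : x ≠ b) :
    s ≠ {a.castSucc, b.castSucc, Fin.last n} := by
  rintro rfl
  simp [ha, hb, (Fin.castSucc_lt_last x).ne] at hx

end Letters

section LastIndex

variable {n : ℕ} (i j k : Fin n)

def lastCoord : {l : Fin (n + 1) // l ≠ i.castSucc ∧ l ≠ j.castSucc ∧ l ≠ k.castSucc} :=
  ⟨Fin.last n, (Fin.castSucc_lt_last i).ne', (Fin.castSucc_lt_last j).ne',
    (Fin.castSucc_lt_last k).ne'⟩

def lastIdxHom : Fn3 (n + 1) i.castSucc j.castSucc k.castSucc →* FreeReflGroup :=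
  PresentedGroup.toGroup (f := fun g => FreeReflGroup.ofIdx (g (lastCoord i j k)))
    (by rintro _ ⟨g, rfl⟩; simpa using FreeReflGroup.ofIdx_mul_self _)

def lastIdx (L : List (TripleIndex (n + 1))) : ZMod 2 × ZMod 2 :=
  idxOf i.castSucc j.castSucc k.castSucc L (lastCoord i j k)

lemma lastIdx_append (L₁ L₂ : List (TripleIndex (n + 1))) :
    lastIdx i j k (L₁ ++ L₂) = lastIdx i j k L₁ + lastIdx i j k L₂ := by
  simp only [lastIdx, idxOf, cntA, List.countP_append, Nat.cast_add, Prod.mk_add_mk]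
  ext <;> ring

lemma lastIdx_nil : lastIdx i j k [] = 0 := rfl

def walkFrom : ZMod 2 × ZMod 2 → List (TripleIndex (n + 1)) → FreeReflGroup
  | _, [] => 1
  | s, t :: L =>
      (if t.1 = {i.castSucc, j.castSucc, k.castSucc} then FreeReflGroup.ofIdx s else 1) *
        walkFrom (s + lastIdx i j k [t]) L

lemma lastIdxHom_wRec (L pre : List (TripleIndex (n + 1))) :
    lastIdxHom i j k (wRec i.castSucc j.castSucc k.castSucc pre L) =
      walkFrom i j k (lastIdx i j k pre) L := by
  induction L generalizing pre with
  | nil => exact map_one _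
  | cons t L ih =>
    rw [wRec, walkFrom, map_mul, ih, lastIdx_append, apply_ite (lastIdxHom i j k), map_one]
    simp only [lastIdxHom, PresentedGroup.toGroup.of]
    rfl

lemma walkFrom_append (s : ZMod 2 × ZMod 2) (L₁ L₂ : List (TripleIndex (n + 1))) :
    walkFrom i j k s (L₁ ++ L₂) =
      walkFrom i j k s L₁ * walkFrom i j k (s + lastIdx i j k L₁) L₂ := by
  induction L₁ generalizing s with
  | nil => simp [walkFrom, lastIdx_nil]
  | cons t L ih =>
    rw [List.cons_append, walkFrom, walkFrom, ih, mul_assoc, add_assoc, ← lastIdx_append,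
      List.singleton_append]

lemma lastIdx_singleton_eq_zero {t : TripleIndex (n + 1)}
    (hjk : t.1 ≠ {j.castSucc, k.castSucc, Fin.last n})
    (hij : t.1 ≠ {i.castSucc, j.castSucc, Fin.last n})
    (hik : t.1 ≠ {i.castSucc, k.castSucc, Fin.last n}) : lastIdx i j k [t] = 0 := by
  simp [lastIdx, idxOf, cntA, lastCoord, hjk, hij, hik]

lemma lastIdx_singleton_of_last_notMem {t : TripleIndex (n + 1)} (ht : Fin.last n ∉ t.1) :
    lastIdx i j k [t] = 0 := by
  refine lastIdx_singleton_eq_zero i j k ?_ ?_ ?_ <;> intro h <;> simp [h] at ht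

lemma walkFrom_of_forall_last_notMem (s : ZMod 2 × ZMod 2) {L : List (TripleIndex (n + 1))}
    (hL : ∀ t ∈ L, Fin.last n ∉ t.1) :
    walkFrom i j k s L = FreeReflGroup.ofIdx s ^ cntA L i.castSucc j.castSucc k.castSucc := by
  induction L with
  | nil => rfl
  | cons t L ih =>
    rw [walkFrom, lastIdx_singleton_of_last_notMem i j k (hL t List.mem_cons_self), add_zero,
      ih fun u hu => hL u (List.mem_cons_of_mem t hu)]
    unfold cntA
    rw [List.countP_cons]
    by_cases h : t.1 = {i.castSucc, j.castSucc, k.castSucc} <;> simp [h, pow_succ']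

lemma lastIdx_of_forall_last_notMem {L : List (TripleIndex (n + 1))}
    (hL : ∀ t ∈ L, Fin.last n ∉ t.1) : lastIdx i j k L = 0 := by
  induction L with
  | nil => rfl
  | cons t L ih =>
    rw [← List.singleton_append, lastIdx_append,
      lastIdx_singleton_of_last_notMem i j k (hL t List.mem_cons_self),
      ih fun u hu => hL u (List.mem_cons_of_mem t hu), add_zero]

variable {i j k}

lemma walkFrom_block (s : ZMod 2 × ZMod 2) {A B : List (TripleIndex (n + 1))}
    {σ : TripleIndex (n + 1)} (hA : ∀ t ∈ A, Fin.last n ∉ t.1)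
    (hB : ∀ t ∈ B, Fin.last n ∉ t.1) (hσ : Fin.last n ∈ σ.1) :
    walkFrom i j k s (A ++ σ :: B) =
      FreeReflGroup.ofIdx s ^ cntA A i.castSucc j.castSucc k.castSucc *
        FreeReflGroup.ofIdx (s + lastIdx i j k [σ]) ^ cntA B i.castSucc j.castSucc k.castSucc := by
  have hσ' : σ.1 ≠ {i.castSucc, j.castSucc, k.castSucc} := by
    intro h
    simp [h, (Fin.castSucc_lt_last _).ne'] at hσ
  rw [walkFrom_append, walkFrom, if_neg hσ', one_mul, walkFrom_of_forall_last_notMem i j k _ hA,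
    lastIdx_of_forall_last_notMem i j k hA, add_zero, walkFrom_of_forall_last_notMem i j k _ hB]

lemma lastIdx_block {A B : List (TripleIndex (n + 1))} {σ : TripleIndex (n + 1)}
    (hA : ∀ t ∈ A, Fin.last n ∉ t.1) (hB : ∀ t ∈ B, Fin.last n ∉ t.1) :
    lastIdx i j k (A ++ σ :: B) = lastIdx i j k [σ] := by
  rw [← List.singleton_append, lastIdx_append, lastIdx_append,
    lastIdx_of_forall_last_notMem i j k hA, lastIdx_of_forall_last_notMem i j k hB, zero_add,
    add_zero]

def Inert (i j k : Fin n) (L : List (TripleIndex (n + 1))) : Prop :=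
  ∀ t ∈ L, ∃ m : Fin n, m ≠ i ∧ m ≠ j ∧ m ≠ k ∧ m.castSucc ∈ t.1

lemma Inert.reverse {L : List (TripleIndex (n + 1))} (h : Inert i j k L) :
    Inert i j k L.reverse :=
  fun t ht => h t (List.mem_reverse.mp ht)

lemma Inert.letter {t : TripleIndex (n + 1)} (ht : Inert i j k [t]) :
    t.1 ≠ {i.castSucc, j.castSucc, k.castSucc} ∧ lastIdx i j k [t] = 0 := by
  obtain ⟨m, hmi, hmj, hmk, hm⟩ := ht t List.mem_cons_self
  have hne : ∀ s, m.castSucc ∉ s → t.1 ≠ s := fun s hs h => hs (h ▸ hm)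
  have hl := (Fin.castSucc_lt_last m).ne
  exact ⟨hne _ (by simp [hmi, hmj, hmk]), lastIdx_singleton_eq_zero i j k
    (hne _ (by simp [hmj, hmk, hl])) (hne _ (by simp [hmi, hmj, hl]))
    (hne _ (by simp [hmi, hmk, hl]))⟩

lemma Inert.cons {t : TripleIndex (n + 1)} {L : List (TripleIndex (n + 1))}
    (h : Inert i j k (t :: L)) : Inert i j k [t] ∧ Inert i j k L :=
  ⟨fun u hu => h u (List.mem_singleton.mp hu ▸ List.mem_cons_self),
    fun u hu => h u (List.mem_cons_of_mem t hu)⟩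

lemma lastIdx_eq_zero_of_inert {L : List (TripleIndex (n + 1))} (hL : Inert i j k L) :
    lastIdx i j k L = 0 := by
  induction L with
  | nil => rfl
  | cons t L ih =>
    rw [← List.singleton_append, lastIdx_append, hL.cons.1.letter.2, ih hL.cons.2, add_zero]

lemma walkFrom_eq_one_of_inert (s : ZMod 2 × ZMod 2) {L : List (TripleIndex (n + 1))}
    (hL : Inert i j k L) : walkFrom i j k s L = 1 := by
  induction L generalizing s with
  | nil => rfl
  | cons t L ih =>
    rw [walkFrom, if_neg hL.cons.1.letter.1, ih _ hL.cons.2, one_mul]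

lemma lastIdx_inert_append {P L : List (TripleIndex (n + 1))} (hP : Inert i j k P) :
    lastIdx i j k (P ++ L) = lastIdx i j k L := by
  rw [lastIdx_append, lastIdx_eq_zero_of_inert hP, zero_add]

lemma walkFrom_inert_append (s : ZMod 2 × ZMod 2) {P L : List (TripleIndex (n + 1))}
    (hP : Inert i j k P) : walkFrom i j k s (P ++ L) = walkFrom i j k s L := by
  rw [walkFrom_append, walkFrom_eq_one_of_inert s hP, lastIdx_eq_zero_of_inert hP, one_mul,
    add_zero]

lemma walkFrom_append_inert (s : ZMod 2 × ZMod 2) {P L : List (TripleIndex (n + 1))}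
    (hP : Inert i j k P) : walkFrom i j k s (L ++ P) = walkFrom i j k s L := by
  rw [walkFrom_append, walkFrom_eq_one_of_inert _ hP, mul_one]

end LastIndex

section Counts

variable {n : ℕ} {i j k : Fin n}

lemma cntA_tripleLetter (hijk : ({i, j, k} : Finset (Fin n)).card = 3) (a b l : Fin n) :
    cntA (tripleLetter a b l) i.castSucc j.castSucc k.castSucc =
      if ({a, b, l} : Finset (Fin n)) = {i, j, k} then 1 else 0 := by
  unfold tripleLetter
  split_ifs with h₁ h₂ h₂
  · simp [cntA, castTriple_val, h₂]
  · simp only [cntA, List.countP_singleton, castTriple_val, ← map_castSucc_triple i j k,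
      Finset.map_inj, h₂, decide_false, Bool.false_eq_true, if_false]
  · exact absurd (h₂ ▸ hijk) h₁
  · rfl

lemma cntA_flatMap_tripleLetter (hijk : ({i, j, k} : Finset (Fin n)).card = 3)
    {a b c : Fin n} (hc : ∀ l, ({a, b, l} : Finset (Fin n)) = {i, j, k} ↔ l = c)
    (L : List (Fin n)) :
    cntA (L.flatMap (tripleLetter a b)) i.castSucc j.castSucc k.castSucc = L.count c := by
  induction L with
  | nil => rfl
  | cons l L ih =>
    rw [List.flatMap_cons, cntA, List.countP_append, ← cntA, ← cntA, ih,
      cntA_tripleLetter hijk, List.count_cons]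
    simp [hc, add_comm]

lemma cntA_upWord (hijk : ({i, j, k} : Finset (Fin n)).card = 3) {a b c : Fin n}
    (hc : ∀ l, ({a, b, l} : Finset (Fin n)) = {i, j, k} ↔ l = c) :
    cntA (upWord a b) i.castSucc j.castSucc k.castSucc = if b < c then 1 else 0 := by
  rw [upWord, cntA_flatMap_tripleLetter hijk hc, List.count_filter_finRange]
  simp

lemma cntA_lowWord (hijk : ({i, j, k} : Finset (Fin n)).card = 3) {a b c : Fin n}
    (hc : ∀ l, ({a, b, l} : Finset (Fin n)) = {i, j, k} ↔ l = c) :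
    cntA (lowWord a b) i.castSucc j.castSucc k.castSucc = if c < b then 1 else 0 := by
  rw [lowWord, cntA_flatMap_tripleLetter hijk hc, List.count_filter_finRange]
  simp

end Counts

section Blocks

variable {n : ℕ} {i j k : Fin n}

lemma walkFrom_cWord (s : ZMod 2 × ZMod 2) (a b : Fin n) {c d : Fin n} (h : c ≠ d) :
    walkFrom i j k s (cWord (sigmaLetter c d) a b) =
      FreeReflGroup.ofIdx s ^ cntA (upWord a b) i.castSucc j.castSucc k.castSucc *
        FreeReflGroup.ofIdx (s + lastIdx i j k [sigTriple ⟨(c, d), h⟩]) ^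
          cntA (lowWord a b) i.castSucc j.castSucc k.castSucc :=
  cWord_sigmaLetter h ▸ walkFrom_block s (fun _ ht => (mem_flatMap_tripleLetter ht).1)
    (fun _ ht => (mem_flatMap_tripleLetter ht).1) (by simp [sigTriple_val])

lemma lastIdx_cWord (a b : Fin n) {c d : Fin n} (h : c ≠ d) :
    lastIdx i j k (cWord (sigmaLetter c d) a b) = lastIdx i j k [sigTriple ⟨(c, d), h⟩] :=
  cWord_sigmaLetter h ▸ lastIdx_block (fun _ ht => (mem_flatMap_tripleLetter ht).1)
    (fun _ ht => (mem_flatMap_tripleLetter ht).1)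

lemma walkFrom_reverse_cWord (s : ZMod 2 × ZMod 2) (a b : Fin n) {c d : Fin n} (h : c ≠ d) :
    walkFrom i j k s (cWord (sigmaLetter c d) a b).reverse =
      FreeReflGroup.ofIdx s ^ cntA (lowWord a b) i.castSucc j.castSucc k.castSucc *
        FreeReflGroup.ofIdx (s + lastIdx i j k [sigTriple ⟨(c, d), h⟩]) ^
          cntA (upWord a b) i.castSucc j.castSucc k.castSucc := by
  rw [reverse_cWord_sigmaLetter h, walkFrom_block s (A := (lowWord a b).reverse)
    (B := (upWord a b).reverse)
    (fun _ ht => (mem_flatMap_tripleLetter (List.mem_reverse.mp ht)).1)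
    (fun _ ht => (mem_flatMap_tripleLetter (List.mem_reverse.mp ht)).1) (by simp [sigTriple_val])]
  simp only [cntA, List.countP_reverse]

lemma lastIdx_reverse_cWord (a b : Fin n) {c d : Fin n} (h : c ≠ d) :
    lastIdx i j k (cWord (sigmaLetter c d) a b).reverse =
      lastIdx i j k [sigTriple ⟨(c, d), h⟩] :=
  reverse_cWord_sigmaLetter h ▸ lastIdx_block (A := (lowWord a b).reverse)
    (B := (upWord a b).reverse)
    (fun _ ht => (mem_flatMap_tripleLetter (List.mem_reverse.mp ht)).1)
    (fun _ ht => (mem_flatMap_tripleLetter (List.mem_reverse.mp ht)).1)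

lemma inert_flatMap_reverse_cWord (a : Fin n) {L : List (Fin n)}
    (hL : ∀ m ∈ L, m ≠ i ∧ m ≠ j ∧ m ≠ k) :
    Inert i j k (L.flatMap fun m => (cWord (sigmaLetter a m) a m).reverse) := by
  intro t ht
  obtain ⟨m, hm, htm⟩ := List.mem_flatMap.mp ht
  obtain ⟨hmi, hmj, hmk⟩ := hL m hm
  exact ⟨m, hmi, hmj, hmk, mem_cWord_sigmaLetter (List.mem_reverse.mp htm)⟩

end Blocks

section GeneratorValues

variable {n : ℕ} {i j k : Fin n} (hij : i < j) (hjk : j < k)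
include hij hjk

lemma lastIdx_of_val_eq_ij {t : TripleIndex (n + 1)}
    (ht : t.1 = {i.castSucc, j.castSucc, Fin.last n}) : lastIdx i j k [t] = (1, 1) := by
  have h₁ := ne_pair_last_of_castSucc_mem (x := i) (s := t.1) (by simp [ht])
    hij.ne (hij.trans hjk).ne
  have h₂ := ne_pair_last_of_castSucc_mem (x := j) (s := t.1) (by simp [ht])
    hij.ne' hjk.ne
  rw [ht] at h₁ h₂
  simp [lastIdx, idxOf, cntA, lastCoord, ht, h₁, h₂]

lemma lastIdx_of_val_eq_ik {t : TripleIndex (n + 1)}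
    (ht : t.1 = {i.castSucc, k.castSucc, Fin.last n}) : lastIdx i j k [t] = (0, 1) := by
  have h₁ := ne_pair_last_of_castSucc_mem (x := i) (s := t.1) (by simp [ht])
    hij.ne (hij.trans hjk).ne
  have h₂ := ne_pair_last_of_castSucc_mem (x := k) (s := t.1) (by simp [ht])
    (hij.trans hjk).ne' hjk.ne'
  rw [ht] at h₁ h₂
  simp [lastIdx, idxOf, cntA, lastCoord, ht, h₁, h₂]

lemma lastIdx_of_val_eq_jk {t : TripleIndex (n + 1)}
    (ht : t.1 = {j.castSucc, k.castSucc, Fin.last n}) : lastIdx i j k [t] = (1, 0) := by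
  have h₁ := ne_pair_last_of_castSucc_mem (x := k) (s := t.1) (by simp [ht])
    (hij.trans hjk).ne' hjk.ne'
  have h₂ := ne_pair_last_of_castSucc_mem (x := j) (s := t.1) (by simp [ht])
    hij.ne' hjk.ne
  rw [ht] at h₁ h₂
  simp [lastIdx, idxOf, cntA, lastCoord, ht, h₁, h₂]

lemma card_triple : ({i, j, k} : Finset (Fin n)).card = 3 :=
  Finset.card_eq_three.mpr ⟨i, j, k, hij.ne, (hij.trans hjk).ne, hjk.ne, rfl⟩

lemma triple_ij_eq_iff (l : Fin n) : ({i, j, l} : Finset (Fin n)) = {i, j, k} ↔ l = k :=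
  Finset.triple_eq_triple_iff (hij.trans hjk).ne' hjk.ne'

lemma triple_ik_eq_iff (l : Fin n) : ({i, k, l} : Finset (Fin n)) = {i, j, k} ↔ l = j := by
  rw [Finset.pair_comm j k]
  exact Finset.triple_eq_triple_iff hij.ne' hjk.ne

lemma triple_jk_eq_iff (l : Fin n) : ({j, k, l} : Finset (Fin n)) = {i, j, k} ↔ l = i := by
  rw [show ({i, j, k} : Finset (Fin n)) = {j, k, i} by ext; simp; tauto]
  exact Finset.triple_eq_triple_iff hij.ne (hij.trans hjk).ne

omit hij hjk in
lemma inert_preWord_of_forall {a b : Fin n}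
    (h : ∀ m, a < m → m < b → m ≠ i ∧ m ≠ j ∧ m ≠ k) :
    Inert i j k (preWord a b) :=
  inert_flatMap_reverse_cWord a fun m hm => by
    simp only [List.mem_filter, List.mem_finRange, true_and, decide_eq_true_eq] at hm
    exact h m hm.1 hm.2

lemma walkFrom_tphiLetters_ij :
    walkFrom i j k 0 (tphiLetters i j) = FreeReflGroup.a * FreeReflGroup.b := by
  have hP := inert_preWord_of_forall (a := i) (b := j) fun m him hmj =>
    ⟨him.ne', hmj.ne, (hmj.trans hjk).ne⟩
  rw [tphiLetters, walkFrom_append_inert _ hP.reverse, walkFrom_append, walkFrom_inert_append _ hP,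
    lastIdx_inert_append hP, lastIdx_cWord _ _ hij.ne, walkFrom_cWord _ _ _ hij.ne,
    walkFrom_cWord _ _ _ hij.ne', lastIdx_of_val_eq_ij hij hjk (sigTriple_val _ _ _),
    lastIdx_of_val_eq_ij hij hjk (sigTriple_swap_val _ _ _),
    cntA_upWord (card_triple hij hjk) (triple_ij_eq_iff hij hjk),
    cntA_lowWord (card_triple hij hjk) (triple_ij_eq_iff hij hjk)]
  simp [hjk, not_lt_of_gt hjk]
  rfl

lemma walkFrom_tphiLetters_jk :
    walkFrom i j k 0 (tphiLetters j k) = FreeReflGroup.c * FreeReflGroup.a := by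
  have hP := inert_preWord_of_forall (a := j) (b := k) fun m hjm hmk =>
    ⟨(hij.trans hjm).ne', hjm.ne', hmk.ne⟩
  rw [tphiLetters, walkFrom_append_inert _ hP.reverse, walkFrom_append, walkFrom_inert_append _ hP,
    lastIdx_inert_append hP, lastIdx_cWord _ _ hjk.ne, walkFrom_cWord _ _ _ hjk.ne,
    walkFrom_cWord _ _ _ hjk.ne', lastIdx_of_val_eq_jk hij hjk (sigTriple_val _ _ _),
    lastIdx_of_val_eq_jk hij hjk (sigTriple_swap_val _ _ _),
    cntA_upWord (card_triple hij hjk) (triple_jk_eq_iff hij hjk),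
    cntA_lowWord (card_triple hij hjk) (triple_jk_eq_iff hij hjk)]
  simp [hij.trans hjk, not_lt_of_gt (hij.trans hjk)]
  rfl

/-- `j` is the only index strictly between `i` and `k` that lies in `{i, j, k}`. -/
lemma preWord_ik_eq : ∃ P₁ P₂, Inert i j k P₁ ∧ Inert i j k P₂ ∧
    preWord i k = P₁ ++ (cWord (sigmaLetter i j) i j).reverse ++ P₂ := by
  have hj : j ∈ (List.finRange n).filter fun m => decide (i < m ∧ m < k) := by simp [hij, hjk]
  obtain ⟨L₁, L₂, hL⟩ := List.append_of_mem hj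
  have hnd := (List.nodup_finRange n).filter (fun m => decide (i < m ∧ m < k))
  rw [hL, List.nodup_middle, List.nodup_cons] at hnd
  have hmem : ∀ m ∈ L₁ ++ L₂, i < m ∧ m < k ∧ m ≠ j := fun m hm => by
    have hm' : m ∈ (List.finRange n).filter fun m => decide (i < m ∧ m < k) := by
      rw [hL]; rcases List.mem_append.mp hm with h | h <;> simp [h]
    simp only [List.mem_filter, List.mem_finRange, true_and, decide_eq_true_eq] at hm'
    exact ⟨hm'.1, hm'.2, fun h => hnd.1 (h ▸ hm)⟩
  refine ⟨L₁.flatMap fun m => (cWord (sigmaLetter i m) i m).reverse,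
    L₂.flatMap fun m => (cWord (sigmaLetter i m) i m).reverse,
    inert_flatMap_reverse_cWord i fun m hm => ?_,
    inert_flatMap_reverse_cWord i fun m hm => ?_, ?_⟩
  · obtain ⟨him, hmk, hmj⟩ := hmem m (List.mem_append_left _ hm)
    exact ⟨him.ne', hmj, hmk.ne⟩
  · obtain ⟨him, hmk, hmj⟩ := hmem m (List.mem_append_right _ hm)
    exact ⟨him.ne', hmj, hmk.ne⟩
  · rw [preWord, hL, List.flatMap_append, List.flatMap_cons, List.append_assoc]

lemma walkFrom_tphiLetters_ik :
    walkFrom i j k 0 (tphiLetters i k) = FreeReflGroup.b * FreeReflGroup.c := by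
  -- the four pieces of `tphiLetters i k` contribute `b`, `c`, `b`, `b`
  obtain ⟨P₁, P₂, h₁, h₂, hpre⟩ := preWord_ik_eq hij hjk
  have hik := hij.trans hjk
  rw [tphiLetters, hpre]
  simp only [List.reverse_append, List.reverse_reverse, List.append_assoc,
    walkFrom_append, walkFrom_eq_one_of_inert _ h₁, lastIdx_eq_zero_of_inert h₁,
    walkFrom_eq_one_of_inert _ h₂, lastIdx_eq_zero_of_inert h₂,
    walkFrom_eq_one_of_inert _ h₁.reverse,
    walkFrom_eq_one_of_inert _ h₂.reverse, lastIdx_eq_zero_of_inert h₂.reverse,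
    walkFrom_cWord _ _ _ hij.ne, walkFrom_reverse_cWord _ _ _ hij.ne, lastIdx_cWord _ _ hij.ne,
    lastIdx_reverse_cWord _ _ hij.ne, walkFrom_cWord _ _ _ hik.ne, lastIdx_cWord _ _ hik.ne,
    walkFrom_cWord _ _ _ hik.ne', lastIdx_cWord _ _ hik.ne',
    lastIdx_of_val_eq_ij hij hjk (sigTriple_val _ _ _),
    lastIdx_of_val_eq_ik hij hjk (sigTriple_val _ _ _),
    lastIdx_of_val_eq_ik hij hjk (t := sigTriple ⟨(k, i), hik.ne'⟩)
      (sigTriple_swap_val _ _ _),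
    cntA_upWord (card_triple hij hjk) (triple_ij_eq_iff hij hjk),
    cntA_lowWord (card_triple hij hjk) (triple_ij_eq_iff hij hjk),
    cntA_upWord (card_triple hij hjk) (triple_ik_eq_iff hij hjk),
    cntA_lowWord (card_triple hij hjk) (triple_ik_eq_iff hij hjk)]
  simp only [hjk, not_lt_of_gt hjk, if_true, if_false, pow_one, pow_zero, one_mul, mul_one,
    zero_add, add_zero]
  rw [FreeReflGroup.ofIdx_mul_self, mul_one]
  rfl

end GeneratorValues

lemma lastIdxHom_tphiGen {n : ℕ} (i j k : Fin n) (π : TGn3 n →* Gn3 (n + 1))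
    (hπ : ∀ g : TGen n, π (PresentedGroup.of g) = piGen g)
    (w : Gn3 (n + 1) →* Fn3 (n + 1) i.castSucc j.castSucc k.castSucc)
    (hw : ∀ L : List (TripleIndex (n + 1)),
      w (gn3Word L) = wWord i.castSucc j.castSucc k.castSucc L)
    {a b : Fin n} (hab : a < b) :
    lastIdxHom i j k (w (π (tphiGen ⟨(a, b), hab⟩))) = walkFrom i j k 0 (tphiLetters a b) := by
  have hA : π ∘ (fun t => PresentedGroup.of (Sum.inl t)) =
      fun t => PresentedGroup.of (castTriple t) := funext fun t => hπ (.inl t)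
  have hS : π ∘ (fun p => PresentedGroup.of (Sum.inr p)) =
      fun p => PresentedGroup.of (sigTriple p) := funext fun p => hπ (.inr p)
  rw [tphiGen, map_tphiWord, hA, hS, tphiWord_eq_gn3Word, hw, wWord, lastIdxHom_wRec, lastIdx_nil]

/-- If `P ∈ PB_n` is a product of `b_{ij}^{±1}, b_{ik}^{±1}, b_{jk}^{±1}` and
`\widetilde{w}_{ijk}(\widetilde{φ}(P)) = 1`, then `P` is a product of elements
`(b_{ij}b_{ik}b_{jk})^{±1}` and `(b_{jk}b_{ik}b_{ij})^{±1}`. -/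
theorem wtilde_trivial_implies_product (n : ℕ) (i j k : Fin n) (hij : i < j) (hjk : j < k)
    (φt : PBn n →* TGn3 n) (hφt : ∀ p : PBGen n, φt (PresentedGroup.of p) = tphiGen p)
    (π : TGn3 n →* Gn3 (n + 1)) (hπ : ∀ g : TGen n, π (PresentedGroup.of g) = piGen g)
    (w : Gn3 (n + 1) →* Fn3 (n + 1) i.castSucc j.castSucc k.castSucc)
    (hw : ∀ L : List (TripleIndex (n + 1)),
      w (gn3Word L) = wWord i.castSucc j.castSucc k.castSucc L)
    (P : PBn n)
    (hP : P ∈ Subgroup.closure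
      {(PresentedGroup.of ⟨(i, j), hij⟩ : PBn n),
        PresentedGroup.of ⟨(i, k), hij.trans hjk⟩, PresentedGroup.of ⟨(j, k), hjk⟩})
    (hPw : w (π (φt P)) = 1) :
    P ∈ Subgroup.closure
      {(PresentedGroup.of ⟨(i, j), hij⟩ : PBn n) * PresentedGroup.of ⟨(i, k), hij.trans hjk⟩ *
          PresentedGroup.of ⟨(j, k), hjk⟩,
        (PresentedGroup.of ⟨(j, k), hjk⟩ : PBn n) * PresentedGroup.of ⟨(i, k), hij.trans hjk⟩ *
          PresentedGroup.of ⟨(i, j), hij⟩} := by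
  obtain ⟨W, rfl⟩ : P ∈ (FreeGroup.lift
      ![pbOf i j hij, pbOf i k (hij.trans hjk), pbOf j k hjk]).range := by
    rwa [FreeGroup.range_lift_eq_closure, Matrix.range_cons, Matrix.range_cons_cons_empty,
      Set.singleton_union]
  have hΨ : ((lastIdxHom i j k).comp (w.comp (π.comp φt))).comp
      (FreeGroup.lift ![pbOf i j hij, pbOf i k (hij.trans hjk), pbOf j k hjk]) =
        SemidirectProduct.inl.comp rho := by
    refine FreeGroup.ext_hom _ _ fun a => ?_
    fin_cases a <;>
      simp [hφt, lastIdxHom_tphiGen i j k π hπ w hw, walkFrom_tphiLetters_ij hij hjk,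
        walkFrom_tphiLetters_ik hij hjk, walkFrom_tphiLetters_jk hij hjk, rho,
        FreeReflGroup.a_mul_b, FreeReflGroup.b_mul_c, FreeReflGroup.c_mul_a]
  have hW : rho W = 1 := SemidirectProduct.inl_injective <| by
    rw [← MonoidHom.comp_apply, ← hΨ]
    simp [hPw]
  exact Subgroup.zpowers_le.mpr (Subgroup.subset_closure (Set.mem_insert _ _))
    (lift_mem_zpowers_of_rho_eq_one (commute_pbOf_ij_delta hij hjk)
      (commute_pbOf_ik_delta hij hjk) hW)
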